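/- arXiv:2209.04647 — 3 statements merged into one kernel-verified Lean document; each statement's English description precedes it below -/
import Mathlib

section
/- Let A ⊆ ℤ and let χ be a coloring of A such that every 3-term arithmetic progression in A is rainbow. Suppose pairs (x₁,y₁),...,(x_s,y_s) of integers satisfy x_i + y_i ∈ A for all i, x_i − y_i = x_j − y_j for all i,j, and χ(x_i + y_i) = χ(x_j + y_j) for all i,j. Then for any indices s ≠ t with x_s + y_t ∈ A we get a contradiction; equivalently, x_s + y_t ∈ A if and only if s = t. -/
/-! Since `x s - y s = x t - y t`, the element `x s + y t` is the midpoint of `x s + y s` and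
`x t + y t`. These two sums are distinct elements of `A` of the same colour, so no rainbow
3-term progression can have them as endpoints: the midpoint cannot lie in `A` unless `s = t`. -/

lemma midpoint_notMem_of_color_eq {α κ : Type*} [Semiring α] (A : Set α) (χ : α → κ)
    (hrainbow : ∀ a c b : α, a ∈ A → c ∈ A → b ∈ A → a ≠ b → a + b = 2 * c →
      χ a ≠ χ c ∧ χ a ≠ χ b ∧ χ c ≠ χ b)
    {a b c : α} (ha : a ∈ A) (hb : b ∈ A) (hab : a ≠ b) (hχ : χ a = χ b)
    (hmid : a + b = 2 * c) : c ∉ A :=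
  fun hc => (hrainbow a c b ha hc hb hab hmid).2.1 hχ

lemma Int.prod_eq_of_sub_eq_of_add_eq {a b c d : ℤ} (hsub : a - b = c - d)
    (hadd : a + b = c + d) : (a, b) = (c, d) :=
  Prod.ext (by omega) (by omega)

/-- If every 3-AP in `A ⊆ ℤ` is rainbow under `χ`, and distinct pairs
`(x i, y i)` all have sums in `A`, equal differences, and equal colors of sums,
then `x s + y t ∈ A ↔ s = t`. -/
theorem stmt_1 {ι : Type*} (A : Set ℤ) (χ : ℤ → ℕ)
    (hrainbow : ∀ a c b : ℤ, a ∈ A → c ∈ A → b ∈ A → a ≠ b → a + b = 2 * c →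
      χ a ≠ χ c ∧ χ a ≠ χ b ∧ χ c ≠ χ b)
    (x y : ι → ℤ)
    (hinj : Function.Injective (fun i => (x i, y i)))
    (hsum : ∀ i, x i + y i ∈ A)
    (hdiff : ∀ i j, x i - y i = x j - y j)
    (hcolor : ∀ i j, χ (x i + y i) = χ (x j + y j)) :
    ∀ s t, x s + y t ∈ A ↔ s = t := by
  intro s t
  refine ⟨fun hmem => ?_, fun hst => hst ▸ hsum s⟩
  by_contra hst
  have hne : x s + y s ≠ x t + y t := fun hadd =>
    hst (hinj (Int.prod_eq_of_sub_eq_of_add_eq (hdiff s t) hadd))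
  have hmid : (x s + y s) + (x t + y t) = 2 * (x s + y t) := by linarith [hdiff s t]
  exact midpoint_notMem_of_color_eq A χ hrainbow (hsum s) (hsum t) hne (hcolor s t) hmid hmem
end

section
/- With Ψ as above, if (x₁,y₁) ≠ (x₂,y₂) satisfy Ψ(x₁,y₁) = Ψ(x₂,y₂), then x₁+y₂ ∉ A and x₂+y₁ ∉ A. -/
/-! Equal differences `x₁ - y₁ = x₂ - y₂` make `x₁ + y₂` (and likewise `x₂ + y₁`) the midpoint of
the sums `x₁ + y₁` and `x₂ + y₂`, which are distinct because the pairs are. Equal colours at the two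
ends then forbid the midpoint from lying in a set whose 3-APs are rainbow. -/

section Midpoint

variable {x₁ y₁ x₂ y₂ : ℕ}

lemma add_add_add_eq_two_mul_of_sub_eq (h : (x₁ : ℤ) - y₁ = x₂ - y₂) :
    (x₁ + y₁) + (x₂ + y₂) = 2 * (x₁ + y₂) := by
  omega

lemma add_eq_add_of_sub_eq (h : (x₁ : ℤ) - y₁ = x₂ - y₂) : x₂ + y₁ = x₁ + y₂ := by
  omega

lemma add_ne_add_of_sub_eq (h : (x₁ : ℤ) - y₁ = x₂ - y₂) (hne : (x₁, y₁) ≠ (x₂, y₂)) :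
    x₁ + y₁ ≠ x₂ + y₂ := by
  intro hsum
  exact hne (Prod.ext (by omega) (by omega))

end Midpoint

lemma midpoint_notMem_of_rainbow {A : Finset ℕ} {χ : ℕ → ℕ}
    (hrainbow : ∀ a c b : ℕ, a ∈ A → c ∈ A → b ∈ A → a ≠ b → a + b = 2 * c →
      χ a ≠ χ c ∧ χ a ≠ χ b ∧ χ c ≠ χ b)
    {a b c : ℕ} (ha : a ∈ A) (hb : b ∈ A) (hab : a ≠ b) (hχ : χ a = χ b)
    (hmid : a + b = 2 * c) : c ∉ A :=
  fun hc => (hrainbow a c b ha hc hb hab hmid).2.1 hχ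

theorem stmt_9_general (A : Finset ℕ) (χ : ℕ → ℕ)
    (hrainbow : ∀ a c b : ℕ, a ∈ A → c ∈ A → b ∈ A → a ≠ b → a + b = 2 * c →
      χ a ≠ χ c ∧ χ a ≠ χ b ∧ χ c ≠ χ b)
    (x₁ y₁ x₂ y₂ : ℕ)
    (hs₁ : x₁ + y₁ ∈ A) (hs₂ : x₂ + y₂ ∈ A)
    (hne : (x₁, y₁) ≠ (x₂, y₂))
    (hΨ : ((x₁ : ℤ) - (y₁ : ℤ), χ (x₁ + y₁)) = ((x₂ : ℤ) - (y₂ : ℤ), χ (x₂ + y₂))) :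
    x₁ + y₂ ∉ A ∧ x₂ + y₁ ∉ A := by
  obtain ⟨hdiff, hχ⟩ := Prod.mk.inj hΨ
  have hcross : x₁ + y₂ ∉ A :=
    midpoint_notMem_of_rainbow hrainbow hs₁ hs₂ (add_ne_add_of_sub_eq hdiff hne) hχ
      (add_add_add_eq_two_mul_of_sub_eq hdiff)
  exact ⟨hcross, add_eq_add_of_sub_eq hdiff ▸ hcross⟩

/-- If `Ψ(x,y) = (x - y, χ(x+y))` takes the same value on two distinct pairs
in `[m] × [m]` whose sums lie in `A` (where every 3-AP of `A` is rainbow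
under `χ`), then `x₁ + y₂ ∉ A` and `x₂ + y₁ ∉ A`. -/
theorem stmt_9 (m : ℕ) (A : Finset ℕ) (χ : ℕ → ℕ)
    (hA : A ⊆ Finset.Icc 1 (2 * m))
    (hrainbow : ∀ a c b : ℕ, a ∈ A → c ∈ A → b ∈ A → a ≠ b → a + b = 2 * c →
      χ a ≠ χ c ∧ χ a ≠ χ b ∧ χ c ≠ χ b)
    (x₁ y₁ x₂ y₂ : ℕ)
    (hx₁ : x₁ ∈ Finset.Icc 1 m) (hy₁ : y₁ ∈ Finset.Icc 1 m)
    (hx₂ : x₂ ∈ Finset.Icc 1 m) (hy₂ : y₂ ∈ Finset.Icc 1 m)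
    (hs₁ : x₁ + y₁ ∈ A) (hs₂ : x₂ + y₂ ∈ A)
    (hne : (x₁, y₁) ≠ (x₂, y₂))
    (hΨ : ((x₁ : ℤ) - (y₁ : ℤ), χ (x₁ + y₁)) = ((x₂ : ℤ) - (y₂ : ℤ), χ (x₂ + y₂))) :
    x₁ + y₂ ∉ A ∧ x₂ + y₁ ∉ A :=
  stmt_9_general A χ hrainbow x₁ y₁ x₂ y₂ hs₁ hs₂ hne hΨ
end

section
/- There does not exist, for any 0 < α < 1 and constant C, an infinite family of sets A_n ⊆ [n] with |A_n| ≥ n − n^α admitting colorings with at most C colors such that every 3-term arithmetic progression in A_n is rainbow. -/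
/-!
Fix `n` and let `M = [1, n] \ A` be the set of missing elements. If `a < x` are two elements of
`A ∩ [1, n/2]` of the same color, then `2x - a ≤ n` completes the progression `(a, x, 2x - a)`,
which is not rainbow, so `2x - a ∈ M`. Reflecting every element of a color class across its least
element therefore injects the class, minus one point, into `M`. Hence each of the `C` color
classes of `A ∩ [1, n/2]` has at most `|M| + 1` elements, and `n/2 ≤ C (|M| + 1) + |M|`. With
`|M| ≤ n^α` this gives `n < 2 (C + 1) (n^α + 1)`, which fails for all large `n` as `α < 1`.
-/

open Filter Finset Asymptotics

theorem Finset.card_le_card_add_one_of_two_mul_sub_mem {B M : Finset ℕ}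
    (h : ∀ a ∈ B, ∀ x ∈ B, a < x → 2 * x - a ∈ M) : #B ≤ #M + 1 := by
  rcases B.eq_empty_or_nonempty with rfl | hB
  · simp
  have hmin := B.min'_mem hB
  have hlt : ∀ x ∈ B.erase (B.min' hB), B.min' hB < x := fun x hx =>
    (B.min'_le x (mem_of_mem_erase hx)).lt_of_ne (ne_of_mem_erase hx).symm
  have hcard : #(B.erase (B.min' hB)) ≤ #M :=
    card_le_card_of_injOn (2 * · - B.min' hB)
      (fun x hx => h _ hmin x (mem_of_mem_erase hx) (hlt x hx))
      (fun x hx y hy hxy => by have := hlt x hx; have := hlt y hy; simp only at hxy; omega)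
  rw [card_erase_of_mem hmin] at hcard
  omega

section ThreeAP

variable {A : Finset ℕ} {χ : ℕ → ℕ} {n : ℕ}

theorem card_filter_color_le_card_sdiff_add_one
    (hχ : ∀ x d : ℕ, 1 ≤ d → x ∈ A → x + d ∈ A → x + 2 * d ∈ A → χ x ≠ χ (x + d)) (c : ℕ) :
    #{x ∈ A ∩ Icc 1 (n / 2) | χ x = c} ≤ #(Icc 1 n \ A) + 1 := by
  refine card_le_card_add_one_of_two_mul_sub_mem fun a ha x hx hax => ?_
  simp only [mem_filter, mem_inter, mem_Icc] at ha hx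
  obtain ⟨d, rfl⟩ : ∃ d, x = a + d := ⟨x - a, by omega⟩
  rw [show 2 * (a + d) - a = a + 2 * d by omega, Finset.mem_sdiff, mem_Icc]
  exact ⟨by omega, fun had => hχ a d (by omega) ha.1.1 hx.1.1 had (ha.2.trans hx.2.symm)⟩

theorem div_two_le_card_inter_add_card_sdiff :
    n / 2 ≤ #(A ∩ Icc 1 (n / 2)) + #(Icc 1 n \ A) :=
  calc n / 2 = #(Icc 1 (n / 2) ∩ A) + #(Icc 1 (n / 2) \ A) := by
        rw [card_inter_add_card_sdiff, Nat.card_Icc, Nat.add_sub_cancel]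
    _ ≤ #(A ∩ Icc 1 (n / 2)) + #(Icc 1 n \ A) := by
        rw [inter_comm]
        gcongr
        exact Nat.div_le_self n 2

theorem lt_two_mul_succ_mul_card_sdiff_succ {C : ℕ} (hC : #(A.image χ) ≤ C)
    (hχ : ∀ x d : ℕ, 1 ≤ d → x ∈ A → x + d ∈ A → x + 2 * d ∈ A → χ x ≠ χ (x + d)) :
    n < 2 * (C + 1) * (#(Icc 1 n \ A) + 1) := by
  have hcolors : #((A ∩ Icc 1 (n / 2)).image χ) ≤ C :=
    (card_le_card (image_subset_image inter_subset_left)).trans hC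
  have hlower : #(A ∩ Icc 1 (n / 2)) ≤ (#(Icc 1 n \ A) + 1) * C :=
    (card_le_mul_card_image _ _ fun c _ => card_filter_color_le_card_sdiff_add_one hχ c).trans
      (Nat.mul_le_mul_left _ hcolors)
  have hhalf := div_two_le_card_inter_add_card_sdiff (A := A) (n := n)
  nlinarith [Nat.div_add_mod n 2, Nat.mod_lt n two_pos]

end ThreeAP

theorem eventually_mul_rpow_add_one_le (K : ℝ) {α : ℝ} (hα : α < 1) :
    ∀ᶠ x : ℝ in atTop, K * (x ^ α + 1) ≤ x := by
  have hrpow : (fun x : ℝ => x ^ α) =o[atTop] id := by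
    refine (isLittleO_iff_tendsto' ((eventually_gt_atTop 0).mono
      fun x hx h0 => (hx.ne' h0).elim)).mpr ?_
    refine (tendsto_rpow_neg_atTop (by linarith : 0 < 1 - α)).congr' ?_
    filter_upwards [eventually_gt_atTop 0] with x hx
    rw [← Real.rpow_sub_one hx.ne', neg_sub]
  filter_upwards [((hrpow.add (isLittleO_const_id_atTop 1)).const_mul_left K).bound one_pos,
    eventually_ge_atTop 0] with x hx hx0
  rw [id_eq, Real.norm_of_nonneg hx0, one_mul] at hx
  exact (le_abs_self _).trans hx

theorem stmt_11_general (α : ℝ) (hα1 : α < 1) (C : ℕ) :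
    ¬ ∃ (A : ℕ → Finset ℕ) (χ : ℕ → ℕ → ℕ),
      {n : ℕ |
        A n ⊆ Finset.Icc 1 n ∧
        (n : ℝ) - (n : ℝ) ^ α ≤ ((A n).card : ℝ) ∧
        ((A n).image (χ n)).card ≤ C ∧
        (∀ x d : ℕ, 1 ≤ d → x ∈ A n → x + d ∈ A n → x + 2 * d ∈ A n →
          χ n x ≠ χ n (x + d) ∧ χ n x ≠ χ n (x + 2 * d) ∧
            χ n (x + d) ≠ χ n (x + 2 * d))}.Infinite := by
  rintro ⟨A, χ, hinf⟩
  obtain ⟨n, ⟨hsub, hcard, hC, hχ⟩, hlarge⟩ :=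
    ((Nat.frequently_atTop_iff_infinite.mpr hinf).and_eventually
      (tendsto_natCast_atTop_atTop.eventually
        (eventually_mul_rpow_add_one_le (2 * (C + 1)) hα1))).exists
  have hmissing : (#(Icc 1 n \ A n) : ℝ) ≤ (n : ℝ) ^ α := by
    rw [card_sdiff_of_subset hsub, Nat.card_Icc, Nat.add_sub_cancel,
      Nat.cast_sub (by simpa using card_le_card hsub)]
    linarith
  have hlt : (n : ℝ) < 2 * (C + 1) * (#(Icc 1 n \ A n) + 1) := by
    exact_mod_cast lt_two_mul_succ_mul_card_sdiff_succ hC fun x d hd hx hxd hx2d =>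
      (hχ x d hd hx hxd hx2d).1
  have hle : (2 * (C + 1) * (#(Icc 1 n \ A n) + 1) : ℝ) ≤ 2 * (C + 1) * ((n : ℝ) ^ α + 1) := by
    gcongr
  linarith

/-- For `0 < α < 1` and a constant `C`, there is no infinite family of sets
`Aₙ ⊆ [n]` with `|Aₙ| ≥ n - n^α`, colored with at most `C` colors such that
every 3-AP in `Aₙ` is rainbow. -/
theorem stmt_11 (α : ℝ) (hα0 : 0 < α) (hα1 : α < 1) (C : ℕ) :
    ¬ ∃ (A : ℕ → Finset ℕ) (χ : ℕ → ℕ → ℕ),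
      {n : ℕ |
        A n ⊆ Finset.Icc 1 n ∧
        (n : ℝ) - (n : ℝ) ^ α ≤ ((A n).card : ℝ) ∧
        ((A n).image (χ n)).card ≤ C ∧
        (∀ x d : ℕ, 1 ≤ d → x ∈ A n → x + d ∈ A n → x + 2 * d ∈ A n →
          χ n x ≠ χ n (x + d) ∧ χ n x ≠ χ n (x + 2 * d) ∧
            χ n (x + d) ≠ χ n (x + 2 * d))}.Infinite :=
  stmt_11_general α hα1 C
end
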